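/- arXiv:1810.13309 — 3 statements merged into one kernel-verified Lean document; each statement's English description precedes it below -/
import Mathlib

section
/- For every p ∈ (0,1), the Lagrangian L_p is convex on the future causal cone C, takes values in (−∞, 0] on C, and is positively homogeneous of degree p, i.e. L_p(c·v) = c^p · L_p(v) for every v ∈ C and every real c > 0. -/
/-- The Minkowski bilinear form on ℝ^{1+n}: η(v,w) = -v₀w₀ + Σᵢ vᵢwᵢ. -/
noncomputable def eta {n : ℕ} (v w : Fin (n + 1) → ℝ) : ℝ :=
  -(v 0 * w 0) + ∑ i : Fin n, v i.succ * w i.succ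

/-- The future causal cone C = {v : η(v,v) ≤ 0 and v₀ ≥ 0}. -/
def FutureCone (n : ℕ) : Set (Fin (n + 1) → ℝ) :=
  {v | eta v v ≤ 0 ∧ 0 ≤ v 0}

/-- The Lagrangian L_p(v) = -(1/p)(-η(v,v))^{p/2}. -/
noncomputable def Lp {n : ℕ} (p : ℝ) (v : Fin (n + 1) → ℝ) : ℝ :=
  -(1 / p) * (-eta v v) ^ (p / 2)

/-- Reverse Cauchy–Schwarz on the causal cone: √(-η(v,v))·√(-η(w,w)) ≤ -η(v,w). -/
lemma rev_cs {n : ℕ} {v w : Fin (n + 1) → ℝ} (hv : v ∈ FutureCone n)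
    (hw : w ∈ FutureCone n) :
    Real.sqrt (-eta v v) * Real.sqrt (-eta w w) ≤ -eta v w := by
  obtain ⟨hv1, hv2⟩ := hv
  obtain ⟨hw1, hw2⟩ := hw
  set a := v 0
  set c := w 0
  set X := ∑ i : Fin n, v i.succ * w i.succ
  set A := ∑ i : Fin n, (v i.succ) ^ 2
  set B := ∑ i : Fin n, (w i.succ) ^ 2
  have hA : 0 ≤ A := Finset.sum_nonneg fun i _ => sq_nonneg _
  have hB : 0 ≤ B := Finset.sum_nonneg fun i _ => sq_nonneg _
  have hvv : -eta v v = a ^ 2 - A := by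
    simp only [eta, A]
    rw [show (∑ i : Fin n, v i.succ * v i.succ) = ∑ i : Fin n, v i.succ ^ 2 from
      Finset.sum_congr rfl fun i _ => (pow_two (v i.succ)).symm]
    ring
  have hww : -eta w w = c ^ 2 - B := by
    simp only [eta, B]
    rw [show (∑ i : Fin n, w i.succ * w i.succ) = ∑ i : Fin n, w i.succ ^ 2 from
      Finset.sum_congr rfl fun i _ => (pow_two (w i.succ)).symm]
    ring
  have hvw : -eta v w = a * c - X := by simp [eta, X]; ring
  have hAa : A ≤ a ^ 2 := by have := hv1; rw [show eta v v = -(a ^ 2 - A) by linarith [hvv]] at this; linarith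
  have hBc : B ≤ c ^ 2 := by have := hw1; rw [show eta w w = -(c ^ 2 - B) by linarith [hww]] at this; linarith
  have hX2 : X ^ 2 ≤ A * B := by
    have := Finset.sum_mul_sq_le_sq_mul_sq Finset.univ (fun i : Fin n => v i.succ)
      (fun i : Fin n => w i.succ)
    simpa [X, A, B] using this
  have hXle : X ≤ Real.sqrt A * Real.sqrt B := by
    have h1 : X ≤ |X| := le_abs_self X
    have h2 : |X| = Real.sqrt (X ^ 2) := (Real.sqrt_sq_eq_abs X).symm
    have h3 : Real.sqrt (X ^ 2) ≤ Real.sqrt (A * B) := Real.sqrt_le_sqrt hX2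
    rw [Real.sqrt_mul hA] at h3
    linarith
  have hsA : Real.sqrt A ≤ a := by
    rw [show a = Real.sqrt (a ^ 2) by rw [Real.sqrt_sq hv2]]
    exact Real.sqrt_le_sqrt hAa
  have hsB : Real.sqrt B ≤ c := by
    rw [show c = Real.sqrt (c ^ 2) by rw [Real.sqrt_sq hw2]]
    exact Real.sqrt_le_sqrt hBc
  have hsAn : 0 ≤ Real.sqrt A := Real.sqrt_nonneg _
  have hsBn : 0 ≤ Real.sqrt B := Real.sqrt_nonneg _
  -- key: √(a²-A)·√(c²-B) ≤ a c - √A √B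
  have hprod : Real.sqrt (a ^ 2 - A) * Real.sqrt (c ^ 2 - B) ≤ a * c - Real.sqrt A * Real.sqrt B := by
    have hac : 0 ≤ a * c - Real.sqrt A * Real.sqrt B := by nlinarith
    have hsq : (a ^ 2 - A) * (c ^ 2 - B) ≤ (a * c - Real.sqrt A * Real.sqrt B) ^ 2 := by
      have e1 : Real.sqrt A ^ 2 = A := Real.sq_sqrt hA
      have e2 : Real.sqrt B ^ 2 = B := Real.sq_sqrt hB
      nlinarith [sq_nonneg (a * Real.sqrt B - c * Real.sqrt A)]
    calc Real.sqrt (a ^ 2 - A) * Real.sqrt (c ^ 2 - B)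
        = Real.sqrt ((a ^ 2 - A) * (c ^ 2 - B)) := (Real.sqrt_mul (by linarith) _).symm
      _ ≤ Real.sqrt ((a * c - Real.sqrt A * Real.sqrt B) ^ 2) := Real.sqrt_le_sqrt hsq
      _ = a * c - Real.sqrt A * Real.sqrt B := by rw [Real.sqrt_sq hac]
  rw [hvv, hww, hvw]
  linarith

lemma eta_eta_nonneg {n : ℕ} {v : Fin (n + 1) → ℝ} (hv : v ∈ FutureCone n) :
    0 ≤ -eta v v := by linarith [hv.1]

lemma eta_combo {n : ℕ} (a b : ℝ) (v w : Fin (n + 1) → ℝ) :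
    eta (a • v + b • w) (a • v + b • w)
      = a ^ 2 * eta v v + 2 * a * b * eta v w + b ^ 2 * eta w w := by
  simp only [eta, Pi.add_apply, Pi.smul_apply, smul_eq_mul]
  rw [show (∑ i : Fin n, (a * v i.succ + b * w i.succ) * (a * v i.succ + b * w i.succ))
      = ∑ i : Fin n, (a ^ 2 * (v i.succ * v i.succ) + 2 * a * b * (v i.succ * w i.succ)
        + b ^ 2 * (w i.succ * w i.succ)) from Finset.sum_congr rfl fun i _ => by ring]
  rw [Finset.sum_add_distrib, Finset.sum_add_distrib, ← Finset.mul_sum, ← Finset.mul_sum,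
    ← Finset.mul_sum]
  ring

/-- Concavity of the Minkowski "norm" on the cone (without normalization of a+b). -/
lemma sqrt_superadd {n : ℕ} {v w : Fin (n + 1) → ℝ} (hv : v ∈ FutureCone n)
    (hw : w ∈ FutureCone n) {a b : ℝ} (ha : 0 ≤ a) (hb : 0 ≤ b) :
    a * Real.sqrt (-eta v v) + b * Real.sqrt (-eta w w)
      ≤ Real.sqrt (-eta (a • v + b • w) (a • v + b • w)) := by
  have hcs := rev_cs hv hw
  have hQ : a ^ 2 * (-eta v v) + 2 * a * b * (-eta v w) + b ^ 2 * (-eta w w)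
      = -eta (a • v + b • w) (a • v + b • w) := by rw [eta_combo]; ring
  have e1 : Real.sqrt (-eta v v) ^ 2 = -eta v v := Real.sq_sqrt (eta_eta_nonneg hv)
  have e2 : Real.sqrt (-eta w w) ^ 2 = -eta w w := Real.sq_sqrt (eta_eta_nonneg hw)
  have hlhs : 0 ≤ a * Real.sqrt (-eta v v) + b * Real.sqrt (-eta w w) := by positivity
  rw [show Real.sqrt (-eta (a • v + b • w) (a • v + b • w))
      = Real.sqrt (a ^ 2 * (-eta v v) + 2 * a * b * (-eta v w) + b ^ 2 * (-eta w w)) by rw [hQ]]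
  rw [show a * Real.sqrt (-eta v v) + b * Real.sqrt (-eta w w)
      = Real.sqrt ((a * Real.sqrt (-eta v v) + b * Real.sqrt (-eta w w)) ^ 2) from
      (Real.sqrt_sq hlhs).symm]
  apply Real.sqrt_le_sqrt
  nlinarith [mul_le_mul_of_nonneg_left hcs (mul_nonneg ha hb)]

lemma cone_convex (n : ℕ) : Convex ℝ (FutureCone n) := by
  intro v hv w hw a b ha hb hab
  constructor
  · have hcs := rev_cs hv hw
    have h01 : 0 ≤ -eta v w := le_trans (by positivity) hcs
    rw [eta_combo]
    nlinarith [mul_nonneg (sq_nonneg a) (eta_eta_nonneg hv),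
      mul_nonneg (sq_nonneg b) (eta_eta_nonneg hw), mul_nonneg (mul_nonneg ha hb) h01]
  · have : (a • v + b • w) 0 = a * v 0 + b * w 0 := by simp
    rw [this]
    have := hv.2; have := hw.2
    positivity

lemma Lp_eq_sqrt {n : ℕ} {p : ℝ} (v : Fin (n + 1) → ℝ) (hQ : 0 ≤ -eta v v) :
    Lp p v = -(1 / p) * Real.sqrt (-eta v v) ^ p := by
  rw [Lp, Real.sqrt_eq_rpow, ← Real.rpow_mul hQ, show (1:ℝ)/2*p = p/2 by ring]

theorem stmt_0 (n : ℕ) (p : ℝ) (hp : p ∈ Set.Ioo (0 : ℝ) 1) :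
    ConvexOn ℝ (FutureCone n) (Lp p) ∧
    (∀ v ∈ FutureCone n, Lp p v ≤ 0) ∧
    (∀ v ∈ FutureCone n, ∀ c : ℝ, 0 < c → Lp p (c • v) = c ^ p * Lp p v) := by
  obtain ⟨hp0, hp1⟩ := hp
  refine ⟨⟨cone_convex n, ?_⟩, ?_, ?_⟩
  · intro v hv w hw a b ha hb hab
    have hvw : a • v + b • w ∈ FutureCone n := cone_convex n hv hw ha hb hab
    rw [Lp_eq_sqrt _ (eta_eta_nonneg hvw), Lp_eq_sqrt _ (eta_eta_nonneg hv),
      Lp_eq_sqrt _ (eta_eta_nonneg hw)]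
    have h1 : a * Real.sqrt (-eta v v) + b * Real.sqrt (-eta w w)
        ≤ Real.sqrt (-eta (a • v + b • w) (a • v + b • w)) := sqrt_superadd hv hw ha hb
    have hconc := (Real.concaveOn_rpow hp0.le hp1.le).2
      (Set.mem_Ici.mpr (Real.sqrt_nonneg (-eta v v)))
      (Set.mem_Ici.mpr (Real.sqrt_nonneg (-eta w w))) ha hb hab
    simp only [smul_eq_mul] at hconc
    have h2 : (a * Real.sqrt (-eta v v) + b * Real.sqrt (-eta w w)) ^ p
        ≤ Real.sqrt (-eta (a • v + b • w) (a • v + b • w)) ^ p :=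
      Real.rpow_le_rpow (by positivity) h1 hp0.le
    have hinv : 0 < 1 / p := by positivity
    simp only [smul_eq_mul]
    nlinarith [mul_le_mul_of_nonneg_left (le_trans hconc h2) hinv.le]
  · intro v hv
    have : 0 ≤ (-eta v v) ^ (p / 2) := Real.rpow_nonneg (eta_eta_nonneg hv) _
    have hinv : 0 < 1 / p := by positivity
    rw [Lp]
    nlinarith
  · intro v hv c hc
    have hQ := eta_eta_nonneg hv
    have hce : -eta (c • v) (c • v) = c ^ 2 * (-eta v v) := by
      have := eta_combo (n := n) c 0 v v
      simp only [zero_smul, add_zero, zero_mul, mul_zero] at this ⊢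
      rw [this]; ring
    rw [Lp, Lp, hce, Real.mul_rpow (by positivity) hQ]
    rw [← Real.rpow_natCast c 2, ← Real.rpow_mul hc.le]
    norm_num
    rw [show (2:ℝ) * (p / 2) = p by ring]
    ring
end

section
/- For every p ∈ (0,1), the Lagrangian L_p is infinitely differentiable (C^∞) on the open set Int C and is strictly convex on Int C. -/
/-- The interior of the future causal cone: Int C = {v : η(v,v) < 0 and v₀ > 0}. -/
def FutureConeInt (n : ℕ) : Set (Fin (n + 1) → ℝ) :=
  {v | eta v v < 0 ∧ 0 < v 0}

variable {n : ℕ}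

lemma eta_comm (v w : Fin (n+1) → ℝ) : eta v w = eta w v := by
  simp only [eta]
  rw [Finset.sum_congr rfl fun i _ => mul_comm (v i.succ) (w i.succ)]
  ring

lemma eta_self_expand (a b : ℝ) (v w : Fin (n+1) → ℝ) :
    eta (a • v + b • w) (a • v + b • w)
      = a^2 * eta v v + 2*a*b * eta v w + b^2 * eta w w := by
  simp only [eta, Pi.add_apply, Pi.smul_apply, smul_eq_mul]
  have h : ∑ i : Fin n, (a * v i.succ + b * w i.succ) * (a * v i.succ + b * w i.succ)
      = a^2 * ∑ i : Fin n, v i.succ * v i.succ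
        + 2*a*b * ∑ i : Fin n, v i.succ * w i.succ
        + b^2 * ∑ i : Fin n, w i.succ * w i.succ := by
    rw [Finset.mul_sum, Finset.mul_sum, Finset.mul_sum, ← Finset.sum_add_distrib,
      ← Finset.sum_add_distrib]
    exact Finset.sum_congr rfl fun i _ => by ring
  rw [h]; ring

lemma eta_smul_self (c : ℝ) (v : Fin (n+1) → ℝ) : eta (c • v) (c • v) = c^2 * eta v v := by
  simp only [eta, Pi.smul_apply, smul_eq_mul]
  have h : ∑ i : Fin n, (c * v i.succ) * (c * v i.succ)
      = c^2 * ∑ i : Fin n, v i.succ * v i.succ := by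
    rw [Finset.mul_sum]; exact Finset.sum_congr rfl fun i _ => by ring
  rw [h]; ring

lemma eta_sub_smul_right (v w : Fin (n+1) → ℝ) (c : ℝ) :
    eta v (w - c • v) = eta v w - c * eta v v := by
  simp only [eta, Pi.sub_apply, Pi.smul_apply, smul_eq_mul]
  have h : ∑ i : Fin n, v i.succ * (w i.succ - c * v i.succ)
      = (∑ i : Fin n, v i.succ * w i.succ) - c * ∑ i : Fin n, v i.succ * v i.succ := by
    rw [Finset.mul_sum, ← Finset.sum_sub_distrib]
    exact Finset.sum_congr rfl fun i _ => by ring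
  rw [h]; ring

lemma eta_sub_smul_self (v w : Fin (n+1) → ℝ) (c : ℝ) :
    eta (w - c • v) (w - c • v) = eta w w - 2*c*eta v w + c^2 * eta v v := by
  have e : (1:ℝ) • w + (-c) • v = w - c • v := by
    funext i; simp [sub_eq_add_neg]
  have h := eta_self_expand 1 (-c) w v
  rw [e] at h
  rw [h, eta_comm w v]; ring
lemma revCS (v w : Fin (n+1) → ℝ) (hv : v ∈ FutureConeInt n) (hw : w ∈ FutureConeInt n) :
    Real.sqrt (-eta v v) * Real.sqrt (-eta w w) ≤ -eta v w := by
  obtain ⟨hv1, hv2⟩ := hv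
  obtain ⟨hw1, hw2⟩ := hw
  set a := v 0 with ha
  set b := w 0 with hb
  set X := ∑ i : Fin n, v i.succ * v i.succ with hX
  set Y := ∑ i : Fin n, w i.succ * w i.succ with hY
  set Z := ∑ i : Fin n, v i.succ * w i.succ with hZ
  have hvv : eta v v = -(a*a) + X := rfl
  have hww : eta w w = -(b*b) + Y := rfl
  have hvw : eta v w = -(a*b) + Z := rfl
  have hX0 : 0 ≤ X := Finset.sum_nonneg fun i _ => mul_self_nonneg _
  have hY0 : 0 ≤ Y := Finset.sum_nonneg fun i _ => mul_self_nonneg _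
  have hCS : Z^2 ≤ X * Y := by
    have := Finset.sum_mul_sq_le_sq_mul_sq Finset.univ (fun i : Fin n => v i.succ) (fun i : Fin n => w i.succ)
    calc Z^2 ≤ (∑ i : Fin n, v i.succ ^2) * (∑ i : Fin n, w i.succ ^2) := this
    _ = X * Y := by rw [hX, hY]; congr 1 <;> exact Finset.sum_congr rfl fun i _ => (pow_two _)
  have hXa : X < a^2 := by rw [hvv] at hv1; nlinarith
  have hYb : Y < b^2 := by rw [hww] at hw1; nlinarith
  have hsX : Real.sqrt X < a := by
    rw [show a = Real.sqrt (a^2) from (Real.sqrt_sq hv2.le).symm]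
    exact Real.sqrt_lt_sqrt hX0 hXa
  have hsY : Real.sqrt Y < b := by
    rw [show b = Real.sqrt (b^2) from (Real.sqrt_sq hw2.le).symm]
    exact Real.sqrt_lt_sqrt hY0 hYb
  have hZst : Z ≤ Real.sqrt X * Real.sqrt Y := by
    calc Z ≤ |Z| := le_abs_self _
    _ = Real.sqrt (Z^2) := (Real.sqrt_sq_eq_abs Z).symm
    _ ≤ Real.sqrt (X*Y) := Real.sqrt_le_sqrt hCS
    _ = Real.sqrt X * Real.sqrt Y := Real.sqrt_mul hX0 Y
  have hst : Real.sqrt X * Real.sqrt Y < a * b :=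
    mul_lt_mul'' hsX hsY (Real.sqrt_nonneg _) (Real.sqrt_nonneg _)
  have hsX2 : Real.sqrt X ^2 = X := Real.sq_sqrt hX0
  have hsY2 : Real.sqrt Y ^2 = Y := Real.sq_sqrt hY0
  have key : (a*a - X)*(b*b - Y) ≤ (a*b - Z)^2 := by
    nlinarith [sq_nonneg (a * Real.sqrt Y - b * Real.sqrt X), hZst, hst,
      mul_nonneg (sub_nonneg.2 hZst) (sub_nonneg.2 (le_of_lt hst))]
  have hne : -eta v v = a*a - X := by rw [hvv]; ring
  have hne2 : -eta w w = b*b - Y := by rw [hww]; ring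
  have hne3 : -eta v w = a*b - Z := by rw [hvw]; ring
  rw [hne, hne2, hne3]
  calc Real.sqrt (a*a - X) * Real.sqrt (b*b - Y)
      = Real.sqrt ((a*a - X)*(b*b - Y)) := (Real.sqrt_mul (by nlinarith) _).symm
  _ ≤ Real.sqrt ((a*b - Z)^2) := Real.sqrt_le_sqrt key
  _ = |a*b - Z| := Real.sqrt_sq_eq_abs _
  _ = a*b - Z := abs_of_nonneg (by nlinarith)
lemma revCS_strict (v w : Fin (n+1) → ℝ) (hv : v ∈ FutureConeInt n)
    (hw : w ∈ FutureConeInt n) (hprop : ∀ c : ℝ, w ≠ c • v) :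
    Real.sqrt (-eta v v) * Real.sqrt (-eta w w) < -eta v w := by
  rcases (revCS v w hv hw).lt_or_eq with h | h
  · exact h
  exfalso
  obtain ⟨hv1, hv2⟩ := hv
  obtain ⟨hw1, hw2⟩ := hw
  have hqv : 0 < -eta v v := by linarith
  have hqw : 0 < -eta w w := by linarith
  set sv := Real.sqrt (-eta v v) with hsv
  set sw := Real.sqrt (-eta w w) with hsw
  have hsv0 : 0 < sv := Real.sqrt_pos.2 hqv
  have hsw0 : 0 < sw := Real.sqrt_pos.2 hqw
  have hsv2 : sv^2 = -eta v v := Real.sq_sqrt hqv.le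
  have hsw2 : sw^2 = -eta w w := Real.sq_sqrt hqw.le
  set c := sw / sv with hc
  have hcsv : c * sv = sw := div_mul_cancel₀ _ hsv0.ne'
  set u := w - c • v with hu
  -- eta v u = 0
  have h1 : eta v u = 0 := by
    rw [hu, eta_sub_smul_right]
    have : eta v w = -(sv * sw) := by linarith [h]
    rw [this]
    have : c * eta v v = -(sw * sv) := by
      have : c * (sv^2) = sw * sv := by rw [hc]; field_simp
      nlinarith [this, hsv2]
    rw [this]; ring
  -- eta u u = 0
  have h2 : eta u u = 0 := by
    rw [hu, eta_sub_smul_self]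
    have hew : eta v w = -(sv * sw) := by linarith [h]
    have e1 : 2 * c * eta v w = -(2 * sw^2) := by
      rw [hew, hc]; field_simp
    have e2 : c^2 * eta v v = -(sw^2) := by
      rw [hc]; field_simp
      nlinarith [hsv2, hsw2]
    have e3 : eta w w = -(sw^2) := by linarith [hsw2]
    linarith [e1, e2, e3]
  -- orthogonality argument
  set U := ∑ i : Fin n, u i.succ * u i.succ with hU
  set X := ∑ i : Fin n, v i.succ * v i.succ with hX
  set Zvu := ∑ i : Fin n, v i.succ * u i.succ with hZ
  have hvu : eta v u = -(v 0 * u 0) + Zvu := rfl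
  have huu : eta u u = -(u 0 * u 0) + U := rfl
  have hvvX : eta v v = -(v 0 * v 0) + X := rfl
  have hXa : X < v 0 * v 0 := by rw [hvvX] at hv1; linarith
  have hU0 : 0 ≤ U := Finset.sum_nonneg fun i _ => mul_self_nonneg _
  have hCS : Zvu^2 ≤ X * U := by
    have := Finset.sum_mul_sq_le_sq_mul_sq Finset.univ (fun i : Fin n => v i.succ)
      (fun i : Fin n => u i.succ)
    calc Zvu^2 ≤ (∑ i : Fin n, v i.succ ^2) * (∑ i : Fin n, u i.succ ^2) := this
    _ = X * U := by rw [hX, hU]; congr 1 <;> exact Finset.sum_congr rfl fun i _ => (pow_two _)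
  have hZeq : v 0 * u 0 = Zvu := by rw [hvu] at h1; linarith
  have hUu0 : U = u 0 * u 0 := by rw [huu] at h2; linarith
  rcases hU0.lt_or_eq with hUpos | hUzero
  · -- U > 0 : contradiction
    have : (v 0 * u 0)^2 < (v 0 * v 0) * U := by
      calc (v 0 * u 0)^2 = Zvu^2 := by rw [hZeq]
      _ ≤ X * U := hCS
      _ < (v 0 * v 0) * U := by exact mul_lt_mul_of_pos_right hXa hUpos
    nlinarith [this, hUu0]
  · -- U = 0 : u = 0, so w = c • v
    have hu0 : u 0 = 0 := mul_self_eq_zero.1 (by linarith [hUu0, hUzero.symm])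
    have hui : ∀ i : Fin n, u i.succ = 0 := by
      intro i
      have := (Finset.sum_eq_zero_iff_of_nonneg
        (fun j (_ : j ∈ Finset.univ) => mul_self_nonneg (u (Fin.succ j)))).1 hUzero.symm i
        (Finset.mem_univ i)
      exact mul_self_eq_zero.1 this
    have : u = 0 := by
      funext i
      refine Fin.cases ?_ ?_ i
      · exact hu0
      · exact fun j => hui j
    exact hprop c (sub_eq_zero.1 this)
lemma sqrt_rpow_eq (p : ℝ) {x : ℝ} (hx : 0 ≤ x) : x ^ (p/2) = Real.sqrt x ^ p := by
  rw [Real.sqrt_eq_rpow, ← Real.rpow_mul hx]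
  congr 1; ring

lemma sq_rpow_half (p : ℝ) {x : ℝ} (hx : 0 ≤ x) : (x^2) ^ (p/2) = x ^ p := by
  rw [← Real.rpow_natCast x 2, ← Real.rpow_mul hx]
  push_cast
  congr 1; ring

lemma key_ineq {p : ℝ} (hp0 : 0 < p) (hp1 : p < 1) (v w : Fin (n+1) → ℝ)
    (hv : v ∈ FutureConeInt n) (hw : w ∈ FutureConeInt n) (hvw : v ≠ w)
    {a b : ℝ} (ha : 0 < a) (hb : 0 < b) (hab : a + b = 1) :
    a * (-eta v v) ^ (p/2) + b * (-eta w w) ^ (p/2)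
      < (-eta (a • v + b • w) (a • v + b • w)) ^ (p/2) := by
  have hqv : 0 < -eta v v := by linarith [hv.1]
  have hqw : 0 < -eta w w := by linarith [hw.1]
  by_cases hprop : ∃ c : ℝ, w = c • v
  · -- proportional case
    obtain ⟨c, hwc⟩ := hprop
    have hw0 : 0 < c * v 0 := by
      have := hw.2; rw [hwc] at this; exact this
    have hc0 : 0 < c := by nlinarith [hv.2]
    have hc1 : c ≠ 1 := by
      rintro rfl
      rw [one_smul] at hwc
      exact hvw hwc.symm
    have hcomb : a • v + b • w = (a + b*c) • v := by
      rw [hwc]; funext i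
      simp only [Pi.add_apply, Pi.smul_apply, smul_eq_mul]; ring
    rw [hcomb, eta_smul_self, hwc, eta_smul_self]
    rw [show -(c^2*eta v v) = c^2 * (-eta v v) by ring,
        show -((a+b*c)^2 * eta v v) = (a+b*c)^2 * (-eta v v) by ring]
    rw [Real.mul_rpow (by positivity) hqv.le, Real.mul_rpow (by positivity) hqv.le]
    rw [sq_rpow_half p hc0.le, sq_rpow_half p (by positivity)]
    have hsc := (Real.strictConcaveOn_rpow hp0 hp1).2 (Set.mem_Ici.2 zero_le_one)
      (Set.mem_Ici.2 hc0.le) (fun h => hc1 h.symm) ha hb hab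
    simp only [smul_eq_mul, Real.one_rpow, mul_one] at hsc
    have hqvp : 0 < (-eta v v)^(p/2) := Real.rpow_pos_of_pos hqv _
    nlinarith [mul_lt_mul_of_pos_right hsc hqvp]
  · -- non-proportional case
    push_neg at hprop
    have hstrict := revCS_strict v w hv hw hprop
    set sv := Real.sqrt (-eta v v) with hsv
    set sw := Real.sqrt (-eta w w) with hsw
    have hsv0 : 0 < sv := Real.sqrt_pos.2 hqv
    have hsw0 : 0 < sw := Real.sqrt_pos.2 hqw
    have hsv2 : sv^2 = -eta v v := Real.sq_sqrt hqv.le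
    have hsw2 : sw^2 = -eta w w := Real.sq_sqrt hqw.le
    have hlt : (a*sv + b*sw)^2 < -eta (a • v + b • w) (a • v + b • w) := by
      rw [eta_self_expand]
      nlinarith [hstrict, hsv2, hsw2, mul_pos ha hb]
    have h2 : ((a*sv+b*sw)^2) ^ (p/2) < (-eta (a • v + b • w) (a • v + b • w))^(p/2) :=
      Real.rpow_lt_rpow (sq_nonneg _) hlt (by positivity)
    rw [sq_rpow_half p (by positivity)] at h2
    have h4 : a * sv^p + b * sw^p ≤ (a*sv + b*sw)^p := by
      have := (Real.concaveOn_rpow hp0.le hp1.le).2 (Set.mem_Ici.2 hsv0.le)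
        (Set.mem_Ici.2 hsw0.le) ha.le hb.le hab
      simpa [smul_eq_mul] using this
    rw [sqrt_rpow_eq p hqv.le, sqrt_rpow_eq p hqw.le]
    calc a * sv^p + b * sw^p ≤ (a*sv + b*sw)^p := h4
    _ < _ := h2
lemma coneConvex : Convex ℝ (FutureConeInt n) := by
  intro v hv w hw a b ha hb hab
  rcases ha.eq_or_lt with rfl | ha'
  · simp only [zero_smul, zero_add]
    have : b = 1 := by linarith
    rw [this, one_smul]; exact hw
  rcases hb.eq_or_lt with rfl | hb'
  · simp only [zero_smul, add_zero]
    have : a = 1 := by linarith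
    rw [this, one_smul]; exact hv
  have hqv : 0 < -eta v v := by linarith [hv.1]
  have hqw : 0 < -eta w w := by linarith [hw.1]
  have hvw : eta v w < 0 := by
    have h := revCS v w hv hw
    nlinarith [mul_pos (Real.sqrt_pos.2 hqv) (Real.sqrt_pos.2 hqw)]
  constructor
  · show eta _ _ < 0
    rw [eta_self_expand]
    nlinarith [hv.1, hw.1, mul_pos ha' hb', mul_pos ha' ha', mul_pos hb' hb']
  · show 0 < a * v 0 + b * w 0
    exact add_pos (mul_pos ha' hv.2) (mul_pos hb' hw.2)

theorem stmt_1 (n : ℕ) (p : ℝ) (hp : p ∈ Set.Ioo (0 : ℝ) 1) :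
    ContDiffOn ℝ (⊤ : ℕ∞) (Lp p) (FutureConeInt n) ∧
    StrictConvexOn ℝ (FutureConeInt n) (Lp p) := by
  obtain ⟨hp0, hp1⟩ := hp
  constructor
  · -- smoothness
    have hproj : ∀ i : Fin (n+1), ContDiff ℝ (⊤ : ℕ∞) (fun v : Fin (n+1) → ℝ => v i) :=
      fun i => (ContinuousLinearMap.proj i : (Fin (n+1) → ℝ) →L[ℝ] ℝ).contDiff
    have hQ : ContDiff ℝ (⊤ : ℕ∞) (fun v : Fin (n+1) → ℝ => -eta v v) := by
      have he : (fun v : Fin (n+1) → ℝ => -eta v v)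
          = fun v => v 0 * v 0 - ∑ i : Fin n, v i.succ * v i.succ := by
        funext v; simp only [eta]; ring
      rw [he]
      exact ((hproj 0).mul (hproj 0)).sub
        (ContDiff.sum fun i _ => (hproj i.succ).mul (hproj i.succ))
    intro v hv
    have hpos : 0 < -eta v v := by linarith [hv.1]
    have h1 : ContDiffAt ℝ (⊤ : ℕ∞) (fun x : ℝ => x ^ (p/2)) (-eta v v) :=
      Real.contDiffAt_rpow_const_of_ne hpos.ne'
    have h2 : ContDiffAt ℝ (⊤ : ℕ∞) (fun v : Fin (n+1) → ℝ => (-eta v v) ^ (p/2)) v :=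
      by have := h1.comp v hQ.contDiffAt; exact this
    exact (contDiffAt_const.mul h2 : ContDiffAt ℝ (⊤ : ℕ∞) (fun v : Fin (n+1) → ℝ => -(1/p) * (-eta v v) ^ (p/2)) v).contDiffWithinAt
  · -- strict convexity
    refine ⟨coneConvex, fun v hv w hw hvw a b ha hb hab => ?_⟩
    have hk := key_ineq hp0 hp1 v w hv hw hvw ha hb hab
    have hpinv : 0 < 1/p := by positivity
    simp only [Lp, smul_eq_mul]
    nlinarith [hk, hpinv]
end

section
/- Let p ∈ (0,1) and let q be its Hölder conjugate, 1/p + 1/q = 1 (so q < 0). For every z ∈ Int C, the supremum over v ∈ C of the quantity η(z,v) − L_p(v) equals −(1/q)(−η(z,z))^{q/2}, and this supremum is attained at v = (−η(z,z))^{(q−2)/2} · z. -/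
lemma mul_eq_add_of_one_div_add_one_div_eq_one {p q : ℝ} (hp0 : p ≠ 0) (hp1 : p ≠ 1)
    (h : 1 / p + 1 / q = 1) : p * q = p + q := by
  have hq0 : q ≠ 0 := by
    rintro rfl
    exact hp1 (by simpa using h)
  field_simp at h
  linarith

/-- Reverse Young inequality; for `0 < p < 1` the conjugate exponent `q` is negative. -/
lemma one_div_mul_rpow_le_mul_sub {a x p q : ℝ} (ha : 0 < a) (hx : 0 ≤ x)
    (hp : p ∈ Set.Ioo (0 : ℝ) 1) (hq : 1 / p + 1 / q = 1) :
    1 / p * x ^ p ≤ a * x - 1 / q * a ^ q := by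
  obtain ⟨hp0, hp1⟩ := hp
  have hpq := mul_eq_add_of_one_div_add_one_div_eq_one hp0.ne' hp1.ne hq
  have hamgm := Real.geom_mean_le_arith_mean2_weighted hp0.le (sub_nonneg.2 hp1.le)
    (mul_nonneg ha.le hx) (Real.rpow_nonneg ha.le q) (add_sub_cancel p 1)
  have hgeom : (a * x) ^ p * (a ^ q) ^ (1 - p) = x ^ p := by
    rw [Real.mul_rpow ha.le hx, ← Real.rpow_mul ha.le, mul_right_comm, ← Real.rpow_add ha,
      show p + q * (1 - p) = 0 by linarith, Real.rpow_zero, one_mul]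
  rw [hgeom] at hamgm
  have hq' : 1 / q = 1 - 1 / p := by linarith
  rw [hq', div_mul_eq_mul_div, one_mul, div_le_iff₀ hp0]
  field_simp
  linarith

lemma eta_smul_left {n : ℕ} (c : ℝ) (v w : Fin (n + 1) → ℝ) :
    eta (c • v) w = c * eta v w := by
  simp only [eta, Pi.smul_apply, smul_eq_mul, mul_add, Finset.mul_sum, mul_assoc, mul_neg]

lemma eta_smul_right {n : ℕ} (c : ℝ) (v w : Fin (n + 1) → ℝ) :
    eta v (c • w) = c * eta v w := by
  simp only [eta, Pi.smul_apply, smul_eq_mul, mul_add, Finset.mul_sum, mul_left_comm c, mul_neg]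

noncomputable def spatialNorm {n : ℕ} (v : Fin (n + 1) → ℝ) : ℝ :=
  √(∑ i : Fin n, v i.succ ^ 2)

lemma spatialNorm_nonneg {n : ℕ} (v : Fin (n + 1) → ℝ) : 0 ≤ spatialNorm v :=
  Real.sqrt_nonneg _

lemma neg_eta_self {n : ℕ} (v : Fin (n + 1) → ℝ) :
    -eta v v = v 0 ^ 2 - spatialNorm v ^ 2 := by
  rw [spatialNorm, Real.sq_sqrt (Finset.sum_nonneg fun i _ => sq_nonneg _), eta]
  simp only [sq, neg_add, neg_neg]
  ring

lemma eta_le_spatialNorm_mul {n : ℕ} (v w : Fin (n + 1) → ℝ) :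
    eta v w ≤ -(v 0 * w 0) + spatialNorm v * spatialNorm w := by
  rw [eta]
  gcongr
  exact Real.sum_mul_le_sqrt_mul_sqrt _ _ _

lemma spatialNorm_le_of_mem_futureCone {n : ℕ} {v : Fin (n + 1) → ℝ}
    (hv : v ∈ FutureCone n) : spatialNorm v ≤ v 0 := by
  refine (pow_le_pow_iff_left₀ (spatialNorm_nonneg v) hv.2 two_ne_zero).1 ?_
  linarith [hv.1, neg_eta_self v]

lemma sq_mul_sub_sq_mul_le (a b x y : ℝ) :
    (a ^ 2 - x ^ 2) * (b ^ 2 - y ^ 2) ≤ (a * b - x * y) ^ 2 := by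
  nlinarith [sq_nonneg (a * y - b * x)]

lemma eta_le_neg_sqrt_mul_sqrt {n : ℕ} {v w : Fin (n + 1) → ℝ} (hv : v ∈ FutureCone n)
    (hw : w ∈ FutureCone n) : eta v w ≤ -(√(-eta v v) * √(-eta w w)) := by
  have hv' := spatialNorm_le_of_mem_futureCone hv
  have hw' := spatialNorm_le_of_mem_futureCone hw
  have hnonneg : 0 ≤ v 0 * w 0 - spatialNorm v * spatialNorm w :=
    sub_nonneg.2 (mul_le_mul hv' hw' (spatialNorm_nonneg w) hv.2)
  have key : √(-eta v v) * √(-eta w w) ≤ v 0 * w 0 - spatialNorm v * spatialNorm w := by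
    rw [← Real.sqrt_mul (neg_nonneg.2 hv.1), ← Real.sqrt_sq hnonneg, neg_eta_self, neg_eta_self]
    exact Real.sqrt_le_sqrt (sq_mul_sub_sq_mul_le _ _ _ _)
  linarith [eta_le_spatialNorm_mul v w]

lemma futureConeInt_subset_futureCone (n : ℕ) : FutureConeInt n ⊆ FutureCone n :=
  fun _ hv => ⟨hv.1.le, hv.2.le⟩

lemma eta_smul_smul {n : ℕ} (c : ℝ) (v : Fin (n + 1) → ℝ) :
    eta (c • v) (c • v) = c ^ 2 * eta v v := by
  rw [eta_smul_left, eta_smul_right, sq, mul_assoc]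

lemma smul_mem_futureCone {n : ℕ} {c : ℝ} {v : Fin (n + 1) → ℝ} (hc : 0 ≤ c)
    (hv : v ∈ FutureCone n) : c • v ∈ FutureCone n := by
  refine ⟨?_, mul_nonneg hc hv.2⟩
  rw [eta_smul_smul]
  exact mul_nonpos_of_nonneg_of_nonpos (sq_nonneg c) hv.1

lemma Lp_smul {n : ℕ} (p : ℝ) {c : ℝ} {v : Fin (n + 1) → ℝ} (hc : 0 ≤ c)
    (hv : v ∈ FutureCone n) : Lp p (c • v) = c ^ p * Lp p v := by
  rw [Lp, Lp, eta_smul_smul, ← mul_neg, Real.mul_rpow (sq_nonneg c) (neg_nonneg.2 hv.1),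
    ← Real.rpow_natCast, ← Real.rpow_mul hc, Nat.cast_ofNat, mul_div_cancel₀ p two_ne_zero]
  ring

lemma eta_sub_Lp_le {n : ℕ} {p q : ℝ} (hp : p ∈ Set.Ioo (0 : ℝ) 1) (hq : 1 / p + 1 / q = 1)
    {z v : Fin (n + 1) → ℝ} (hz : z ∈ FutureConeInt n) (hv : v ∈ FutureCone n) :
    eta z v - Lp p v ≤ -(1 / q) * (-eta z z) ^ (q / 2) := by
  have hs : 0 < -eta z z := neg_pos.2 hz.1
  have ht : 0 ≤ -eta v v := neg_nonneg.2 hv.1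
  have hyoung :=
    one_div_mul_rpow_le_mul_sub (Real.sqrt_pos.2 hs) (Real.sqrt_nonneg (-eta v v)) hp hq
  have hrev := eta_le_neg_sqrt_mul_sqrt (futureConeInt_subset_futureCone n hz) hv
  rw [Real.sqrt_eq_rpow, Real.sqrt_eq_rpow, ← Real.rpow_mul ht, ← Real.rpow_mul hs.le] at hyoung
  rw [Real.sqrt_eq_rpow, Real.sqrt_eq_rpow] at hrev
  rw [Lp]
  field_simp at hyoung ⊢
  linarith

lemma eta_sub_Lp_rpow_smul_self {n : ℕ} {p q : ℝ} (hp : p ∈ Set.Ioo (0 : ℝ) 1)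
    (hq : 1 / p + 1 / q = 1) {z : Fin (n + 1) → ℝ} (hz : z ∈ FutureConeInt n) :
    eta z ((-eta z z) ^ ((q - 2) / 2) • z) - Lp p ((-eta z z) ^ ((q - 2) / 2) • z)
      = -(1 / q) * (-eta z z) ^ (q / 2) := by
  have hpq := mul_eq_add_of_one_div_add_one_div_eq_one hp.1.ne' hp.2.ne hq
  set s := -eta z z with hs_def
  have hs : 0 < s := neg_pos.2 hz.1
  have hlin : s ^ ((q - 2) / 2) * s = s ^ (q / 2) := by
    rw [← Real.rpow_add_one hs.ne']
    ring_nf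
  have hhom : (s ^ ((q - 2) / 2)) ^ p * s ^ (p / 2) = s ^ (q / 2) := by
    rw [← Real.rpow_mul hs.le, ← Real.rpow_add hs]
    congr 1
    linear_combination hpq / 2
  rw [eta_smul_right,
    Lp_smul p (Real.rpow_nonneg hs.le _) (futureConeInt_subset_futureCone n hz), Lp, ← hs_def]
  linear_combination -hlin + hhom / p + s ^ (q / 2) * hq - s ^ ((q - 2) / 2) * hs_def

theorem stmt_4 (n : ℕ) (p q : ℝ) (hp : p ∈ Set.Ioo (0 : ℝ) 1)
    (hq : 1 / p + 1 / q = 1)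
    (z : Fin (n + 1) → ℝ) (hz : z ∈ FutureConeInt n) :
    (∀ v ∈ FutureCone n, eta z v - Lp p v ≤ -(1 / q) * (-eta z z) ^ (q / 2)) ∧
    ((-eta z z) ^ ((q - 2) / 2) • z ∈ FutureCone n) ∧
    eta z ((-eta z z) ^ ((q - 2) / 2) • z) - Lp p ((-eta z z) ^ ((q - 2) / 2) • z)
      = -(1 / q) * (-eta z z) ^ (q / 2) :=
  ⟨fun _ hv => eta_sub_Lp_le hp hq hz hv,
    smul_mem_futureCone (Real.rpow_nonneg (neg_nonneg.2 hz.1.le) _)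
      (futureConeInt_subset_futureCone n hz),
    eta_sub_Lp_rpow_smul_self hp hq hz⟩
end
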